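/- arXiv:2007.15915 — 2 statements merged into one kernel-verified Lean document; each statement's English description precedes it below -/
import Mathlib

section
/- Let S be a trace-free symmetric endomorphism of ℝ³ with tr(S²)³ = 6·tr(S³)² and tr(S³) ≠ 0. Then the eigenspace of S corresponding to the double eigenvalue −tr(S³)/tr(S²) is two-dimensional, and the eigenspace for the simple eigenvalue 2·tr(S³)/tr(S²) is one-dimensional and orthogonal to it. -/
/-!
In an orthonormal eigenbasis the eigenvalues satisfy `μ₁ + μ₂ + μ₃ = 0`, and Newton's identities
make each of them a root of `6x³ - 3 I x - 2 J`. Under `I³ = 6 J²` this cubic is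
`6 (x - λ)² (x + 2λ)` with `λ = -J / I ≠ 0`, so every eigenvalue is `λ` or `-2λ`, and the vanishing
trace forces `λ` to occur twice and `-2λ` once. Eigenspaces of a symmetric map for distinct
eigenvalues are orthogonal.
-/

open Module Module.End Finset

namespace LinearMap.IsSymmetric

variable {𝕜 E : Type*} [RCLike 𝕜] [NormedAddCommGroup E] [InnerProductSpace 𝕜 E]
  [FiniteDimensional 𝕜 E] {n : ℕ} {T : E →ₗ[𝕜] E}

lemma trace_pow_eq_sum_eigenvalues_pow (hT : T.IsSymmetric) (hn : finrank 𝕜 E = n) (k : ℕ) :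
    (T ^ k).trace 𝕜 E = ∑ i, (hT.eigenvalues hn i : 𝕜) ^ k := by
  rw [trace_eq_sum_inner _ (hT.eigenvectorBasis hn)]
  refine Fintype.sum_congr _ _ fun i => ?_
  rw [(hT.hasEigenvector_eigenvectorBasis hn i).pow_apply, inner_smul_right,
    (hT.eigenvectorBasis hn).inner_eq_one, mul_one]

end LinearMap.IsSymmetric

lemma six_mul_cube_eq_of_sum_eq_zero {R : Type*} [CommRing R] (μ : Fin 3 → R)
    (hμ : ∑ i, μ i = 0) (i : Fin 3) :
    6 * μ i ^ 3 = 3 * (∑ j, μ j ^ 2) * μ i + 2 * ∑ j, μ j ^ 3 := by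
  rw [Fin.sum_univ_three] at hμ
  simp only [Fin.sum_univ_three]
  fin_cases i <;> simp only [Fin.zero_eta, Fin.mk_one, Fin.reduceFinMk]
  · linear_combination (μ 0 ^ 2 - (μ 1 + μ 2) * μ 0 + (μ 1 + μ 2) ^ 2 - 3 * (μ 1 ^ 2 + μ 2 ^ 2)) * hμ
  · linear_combination (μ 1 ^ 2 - (μ 0 + μ 2) * μ 1 + (μ 0 + μ 2) ^ 2 - 3 * (μ 0 ^ 2 + μ 2 ^ 2)) * hμ
  · linear_combination (μ 2 ^ 2 - (μ 0 + μ 1) * μ 2 + (μ 0 + μ 1) ^ 2 - 3 * (μ 0 ^ 2 + μ 1 ^ 2)) * hμ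

lemma eq_six_mul_sq_and_eq_neg_six_mul_cube {K : Type*} [Field K] [CharZero K] {I J : K}
    (h : I ^ 3 = 6 * J ^ 2) (hJ : J ≠ 0) :
    I = 6 * (-J / I) ^ 2 ∧ J = -6 * (-J / I) ^ 3 := by
  have hI : I ≠ 0 := by
    rintro rfl
    exact hJ (pow_eq_zero_iff two_ne_zero |>.mp (by linear_combination -h / 6))
  constructor <;> field_simp <;> linear_combination h

lemma eq_or_eq_neg_two_mul_of_six_mul_cube_eq {K : Type*} [Field K] [CharZero K] {x l : K}
    (h : 6 * x ^ 3 = 3 * (6 * l ^ 2) * x + 2 * (-6 * l ^ 3)) : x = l ∨ x = -2 * l := by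
  have hfactor : (x - l) ^ 2 * (x + 2 * l) = 0 := by linear_combination h / 6
  rcases mul_eq_zero.mp hfactor with h | h
  · exact .inl (sub_eq_zero.mp (pow_eq_zero_iff two_ne_zero |>.mp h))
  · exact .inr (by linear_combination h)

lemma card_filter_eq_two_mul_card_filter {ι K : Type*} [Fintype ι] [Field K] [CharZero K]
    [DecidableEq K] {μ : ι → K} {l : K} (hl : l ≠ 0) (hμ : ∀ i, μ i = l ∨ μ i = -2 * l)
    (hsum : ∑ i, μ i = 0) :
    #{i | μ i = l} = 2 * #{i | μ i = -2 * l} ∧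
      #{i | μ i = l} + #{i | μ i = -2 * l} = Fintype.card ι := by
  have hne : ∀ i, ¬ μ i = l ↔ μ i = -2 * l := fun i =>
    ⟨(hμ i).resolve_left, fun h h' => hl (by linear_combination (h - h') / 3)⟩
  have htotal := card_filter_add_card_filter_not (s := univ) (fun i => μ i = l)
  rw [filter_congr fun i _ => hne i, card_univ] at htotal
  rw [← sum_filter_add_sum_filter_not _ (fun i => μ i = l), filter_congr fun i _ => hne i,
    sum_congr rfl fun i hi => (mem_filter.1 hi).2, sum_congr rfl fun i hi => (mem_filter.1 hi).2,
    sum_const, sum_const, nsmul_eq_mul, nsmul_eq_mul] at hsum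
  refine ⟨?_, htotal⟩
  have hcast : (#{i | μ i = l} : K) * l = ((2 * #{i | μ i = -2 * l} : ℕ) : K) * l := by
    push_cast
    linear_combination hsum
  exact_mod_cast mul_right_cancel₀ hl hcast

theorem degenerate_tracefree_symmetric_eigenspaces
    (S : EuclideanSpace ℝ (Fin 3) →ₗ[ℝ] EuclideanSpace ℝ (Fin 3))
    (hS : S.IsSymmetric) (htr : LinearMap.trace ℝ _ S = 0)
    (IS JS : ℝ) (hIS : IS = LinearMap.trace ℝ _ (S ∘ₗ S))
    (hJS : JS = LinearMap.trace ℝ _ (S ∘ₗ S ∘ₗ S))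
    (hdeg : IS ^ 3 = 6 * JS ^ 2) (hJ0 : JS ≠ 0) :
    Module.finrank ℝ (Module.End.eigenspace S (-JS / IS)) = 2 ∧
    Module.finrank ℝ (Module.End.eigenspace S (2 * JS / IS)) = 1 ∧
    Module.End.eigenspace S (2 * JS / IS) ≤ (Module.End.eigenspace S (-JS / IS))ᗮ := by
  have hn : finrank ℝ (EuclideanSpace ℝ (Fin 3)) = 3 := finrank_euclideanSpace_fin
  set μ := hS.eigenvalues hn
  have hsum : ∑ i, μ i = 0 := by
    simpa [htr, eq_comm] using hS.trace_pow_eq_sum_eigenvalues_pow hn 1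
  have hI : IS = ∑ i, μ i ^ 2 := by
    simpa [hIS, pow_two, mul_eq_comp] using hS.trace_pow_eq_sum_eigenvalues_pow hn 2
  have hJ : JS = ∑ i, μ i ^ 3 := by
    simpa [hJS, pow_succ', mul_eq_comp] using hS.trace_pow_eq_sum_eigenvalues_pow hn 3
  obtain ⟨hIl, hJl⟩ := eq_six_mul_sq_and_eq_neg_six_mul_cube hdeg hJ0
  set l := -JS / IS
  have hl : l ≠ 0 := fun h => hJ0 (by rw [hJl, h]; ring)
  have hsimple : 2 * JS / IS = -2 * l := by ring
  have hμ : ∀ i, μ i = l ∨ μ i = -2 * l := fun i =>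
    eq_or_eq_neg_two_mul_of_six_mul_cube_eq <| by
      rw [← hIl, ← hJl, hI, hJ]
      exact six_mul_cube_eq_of_sum_eq_zero μ hsum i
  obtain ⟨hratio, htotal⟩ := card_filter_eq_two_mul_card_filter hl hμ hsum
  rw [Fintype.card_fin] at htotal
  rw [hsimple, ← hS.card_filter_eigenvalues_eq hn, ← hS.card_filter_eigenvalues_eq hn]
  refine ⟨by convert (by omega : #{i | μ i = l} = 2); rfl,
    by convert (by omega : #{i | μ i = -2 * l} = 1); rfl, ?_⟩
  refine Submodule.isOrtho_iff_le.mp (hS.orthogonalFamily_eigenspaces.isOrtho fun h => hl ?_)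
  linear_combination -h / 3
end

section
/- Let v be a nonzero vector in ℝ³ and R ∈ SO(3) with R v = v. If S is a symmetric trace-free 3×3 matrix satisfying R S Rᵀ = S for all rotations R about the axis v, then S = λ(I − 3 n nᵀ) for some λ ∈ ℝ, where n = v/|v|. -/
/-!
Write `P = n nᵀ` and `K` for the cross-product matrix `x ↦ n × x` of the unit axis. The
quarter-turn `Q = P + K` about `n` is a rotation fixing `v`, so `S` commutes with `Q`, hence with
`Q² = 2P - 1`, hence with `P` and with `K = Q - P`. Then `SK` is skew-symmetric and kills `n`, so
`SK = tK`; multiplying by `K` (with `K² = P - 1`) gives `S(P - 1) = t(P - 1)`, while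
`SP = PSP = (nᵀSn)P`. So `S = αP - t(P - 1)`, and `tr S = 0` forces `α = -2t`, i.e.
`S = t(1 - 3P)`.
-/

open Matrix

namespace Matrix

section CrossMatrix

variable {R : Type*} [CommRing R]

def crossMatrix (w : Fin 3 → R) : Matrix (Fin 3) (Fin 3) R :=
  !![0, -w 2, w 1; w 2, 0, -w 0; -w 1, w 0, 0]

@[simp]
lemma crossMatrix_mulVec (w x : Fin 3 → R) : crossMatrix w *ᵥ x = w ⨯₃ x := by
  ext i
  fin_cases i <;> simp [crossMatrix, cross_apply, mulVec, dotProduct, Fin.sum_univ_three] <;> ring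

lemma crossMatrix_smul (c : R) (w : Fin 3 → R) : crossMatrix (c • w) = c • crossMatrix w := by
  ext i j
  fin_cases i <;> fin_cases j <;> simp [crossMatrix]

lemma transpose_crossMatrix (w : Fin 3 → R) : (crossMatrix w)ᵀ = -crossMatrix w := by
  ext i j
  fin_cases i <;> fin_cases j <;> simp [crossMatrix]

variable [IsAddTorsionFree R]

lemma eq_crossMatrix_of_transpose_eq_neg {M : Matrix (Fin 3) (Fin 3) R} (hM : Mᵀ = -M) :
    M = crossMatrix ![M 2 1, M 0 2, M 1 0] := by
  have h (i j : Fin 3) : M j i = -M i j := congr_fun₂ hM i j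
  have h₀ (i : Fin 3) : M i i = 0 := self_eq_neg.mp (h i i)
  ext i j
  fin_cases i <;> fin_cases j <;> simp [crossMatrix, h₀, h 0 1, h 0 2, h 1 2]

lemma exists_eq_smul_crossMatrix_of_mulVec_eq_zero {M : Matrix (Fin 3) (Fin 3) R}
    {n : Fin 3 → R} (hn : n ⬝ᵥ n = 1) (hM : Mᵀ = -M) (hMn : M *ᵥ n = 0) :
    ∃ t : R, M = t • crossMatrix n := by
  set w : Fin 3 → R := ![M 2 1, M 0 2, M 1 0]
  have hM' : M = crossMatrix w := eq_crossMatrix_of_transpose_eq_neg hM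
  have hw : w = (w ⬝ᵥ n) • n := by
    have := cross_cross_eq_smul_sub_smul' n w n
    rw [← crossMatrix_mulVec w, ← hM', hMn, map_zero, hn, one_smul] at this
    exact sub_eq_zero.mp this.symm
  exact ⟨w ⬝ᵥ n, by rw [hM', hw, crossMatrix_smul, ← hw]⟩

end CrossMatrix

section QuarterTurn

variable {R : Type*} [CommRing R] {n : Fin 3 → R}

lemma vecMulVec_self_mul_self (hn : n ⬝ᵥ n = 1) :
    vecMulVec n n * vecMulVec n n = vecMulVec n n := by
  rw [vecMulVec_mul_vecMulVec, hn, one_smul]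

lemma crossMatrix_mul_vecMulVec_self (n : Fin 3 → R) : crossMatrix n * vecMulVec n n = 0 := by
  rw [mul_vecMulVec, crossMatrix_mulVec, cross_self, zero_vecMulVec]

lemma vecMulVec_self_mul_crossMatrix (n : Fin 3 → R) : vecMulVec n n * crossMatrix n = 0 := by
  rw [← transpose_transpose (vecMulVec n n * _), transpose_mul, transpose_crossMatrix,
    transpose_vecMulVec, neg_mul, crossMatrix_mul_vecMulVec_self, neg_zero, transpose_zero]

lemma crossMatrix_mul_self (hn : n ⬝ᵥ n = 1) :
    crossMatrix n * crossMatrix n = vecMulVec n n - 1 := by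
  refine ext_iff_mulVec.mpr fun x => ?_
  rw [← mulVec_mulVec, crossMatrix_mulVec, crossMatrix_mulVec, cross_cross_eq_smul_sub_smul',
    hn, one_smul, sub_mulVec, one_mulVec, vecMulVec_mulVec, op_smul_eq_smul]

lemma vecMulVec_self_mul_mul_vecMulVec_self (n : Fin 3 → R) (S : Matrix (Fin 3) (Fin 3) R) :
    vecMulVec n n * S * vecMulVec n n = (n ⬝ᵥ S *ᵥ n) • vecMulVec n n := by
  rw [vecMulVec_mul, vecMulVec_mul_vecMulVec, vecMulVec_smul, dotProduct_mulVec]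

def quarterTurn (n : Fin 3 → R) : Matrix (Fin 3) (Fin 3) R :=
  vecMulVec n n + crossMatrix n

lemma quarterTurn_mul_transpose (hn : n ⬝ᵥ n = 1) : quarterTurn n * (quarterTurn n)ᵀ = 1 := by
  rw [quarterTurn, transpose_add, transpose_vecMulVec, transpose_crossMatrix, add_mul, mul_add,
    mul_add, vecMulVec_self_mul_self hn, mul_neg, vecMulVec_self_mul_crossMatrix,
    crossMatrix_mul_vecMulVec_self, mul_neg, crossMatrix_mul_self hn]
  abel

lemma quarterTurn_mul_self (hn : n ⬝ᵥ n = 1) :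
    quarterTurn n * quarterTurn n = 2 • vecMulVec n n - 1 := by
  rw [quarterTurn, add_mul, mul_add, mul_add, vecMulVec_self_mul_self hn,
    vecMulVec_self_mul_crossMatrix, crossMatrix_mul_vecMulVec_self, crossMatrix_mul_self hn]
  abel

lemma quarterTurn_mulVec_self (hn : n ⬝ᵥ n = 1) : quarterTurn n *ᵥ n = n := by
  rw [quarterTurn, add_mulVec, crossMatrix_mulVec, cross_self, add_zero, vecMulVec_mulVec, hn,
    MulOpposite.op_one, one_smul]

lemma det_quarterTurn (hn : n ⬝ᵥ n = 1) : (quarterTurn n).det = 1 := by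
  simp only [dotProduct, Fin.sum_univ_three] at hn
  rw [quarterTurn, det_fin_three]
  simp only [crossMatrix, add_apply, vecMulVec_apply, of_apply, cons_val', cons_val_zero,
    cons_val_fin_one, add_zero, cons_val_one, cons_val]
  linear_combination (n 0 * n 0 + n 1 * n 1 + n 2 * n 2 + 1) * hn

end QuarterTurn

lemma commute_of_mul_mul_transpose_eq {m α : Type*} [Fintype m] [DecidableEq m] [CommRing α]
    {A S : Matrix m m α} (hA : A * Aᵀ = 1) (h : A * S * Aᵀ = S) : Commute S A :=
  calc S * A = A * S * Aᵀ * A := by rw [h]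
    _ = A * S := by rw [mul_assoc _ Aᵀ, mul_eq_one_comm.mp hA, mul_one]

instance {m n α : Type*} [AddMonoid α] [IsAddTorsionFree α] :
    IsAddTorsionFree (Matrix m n α) :=
  inferInstanceAs (IsAddTorsionFree (m → n → α))

section AxialInvariance

variable {R : Type*} [CommRing R] [IsAddTorsionFree R] {n : Fin 3 → R}
  {S : Matrix (Fin 3) (Fin 3) R}

lemma commute_vecMulVec_self_of_commute_quarterTurn (hn : n ⬝ᵥ n = 1)
    (h : Commute S (quarterTurn n)) : Commute S (vecMulVec n n) := by
  have h₂ : Commute S (2 • vecMulVec n n) := by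
    simpa [quarterTurn_mul_self hn] using (h.mul_right h).add_right (Commute.one_right S)
  refine nsmul_right_injective two_ne_zero ?_
  simpa only [smul_mul_assoc, mul_smul_comm] using h₂.eq

lemma commute_crossMatrix_of_commute_quarterTurn (hn : n ⬝ᵥ n = 1)
    (h : Commute S (quarterTurn n)) : Commute S (crossMatrix n) := by
  simpa [quarterTurn] using h.sub_right (commute_vecMulVec_self_of_commute_quarterTurn hn h)

lemma exists_eq_smul_one_sub_three_smul_vecMulVec (hn : n ⬝ᵥ n = 1) (hS : S.IsSymm)
    (htr : S.trace = 0) (h : Commute S (quarterTurn n)) :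
    ∃ t : R, S = t • (1 - (3 : R) • vecMulVec n n) := by
  set P := vecMulVec n n
  set K := crossMatrix n
  have hPP : P * P = P := vecMulVec_self_mul_self hn
  have hKK : K * K = P - 1 := crossMatrix_mul_self hn
  have hP : Commute S P := commute_vecMulVec_self_of_commute_quarterTurn hn h
  have hK : Commute S K := commute_crossMatrix_of_commute_quarterTurn hn h
  obtain ⟨t, ht⟩ : ∃ t, S * K = t • K := by
    refine exists_eq_smul_crossMatrix_of_mulVec_eq_zero hn ?_ ?_
    · rw [transpose_mul, transpose_crossMatrix, hS.eq, neg_mul, hK.eq]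
    · rw [← mulVec_mulVec, crossMatrix_mulVec, cross_self, mulVec_zero]
  have hSP : S * P = (n ⬝ᵥ S *ᵥ n) • P := by
    rw [← vecMulVec_self_mul_mul_vecMulVec_self, ← hP.eq, mul_assoc, hPP]
  have hSP' : S * (P - 1) = t • (P - 1) := by
    rw [← hKK, ← mul_assoc, ht, smul_mul_assoc]
  have hS_eq : S = (n ⬝ᵥ S *ᵥ n) • P - t • (P - 1) := by
    rw [← hSP, ← hSP', mul_sub, mul_one, sub_sub_cancel]
  have hα : n ⬝ᵥ S *ᵥ n = -2 * t := by
    rw [hS_eq, trace_sub, trace_smul, trace_smul, trace_sub, trace_one, trace_vecMulVec, hn,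
      Fintype.card_fin, smul_eq_mul, smul_eq_mul, Nat.cast_ofNat] at htr
    linear_combination htr
  refine ⟨t, ?_⟩
  rw [hS_eq, hα]
  module

end AxialInvariance
end Matrix

theorem axially_invariant_tracefree_symmetric_is_LRS
    (v : Fin 3 → ℝ) (hv : v ≠ 0) (n : Fin 3 → ℝ)
    (hn : n = (Real.sqrt (v ⬝ᵥ v))⁻¹ • v)
    (S : Matrix (Fin 3) (Fin 3) ℝ) (hS : S.IsSymm) (htr : S.trace = 0)
    (hinv : ∀ R : Matrix (Fin 3) (Fin 3) ℝ, R * Rᵀ = 1 → R.det = 1 → R.mulVec v = v →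
      R * S * Rᵀ = S) :
    ∃ l : ℝ, S = l • ((1 : Matrix (Fin 3) (Fin 3) ℝ) - (3 : ℝ) • Matrix.vecMulVec n n) := by
  have hvv : 0 < v ⬝ᵥ v := by simpa using dotProduct_self_star_pos_iff.mpr hv
  have hn_unit : n ⬝ᵥ n = 1 := by
    rw [hn, smul_dotProduct, dotProduct_smul, smul_eq_mul, smul_eq_mul, ← mul_assoc, ← mul_inv,
      Real.mul_self_sqrt hvv.le, inv_mul_cancel₀ hvv.ne']
  have hv_eq : v = √(v ⬝ᵥ v) • n := by
    rw [hn, smul_smul, mul_inv_cancel₀ (Real.sqrt_pos.mpr hvv).ne', one_smul]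
  have hQv : quarterTurn n *ᵥ v = v := by
    rw [hv_eq, mulVec_smul, quarterTurn_mulVec_self hn_unit]
  have hQ := quarterTurn_mul_transpose hn_unit
  exact exists_eq_smul_one_sub_three_smul_vecMulVec hn_unit hS htr
    (commute_of_mul_mul_transpose_eq hQ (hinv _ hQ (det_quarterTurn hn_unit) hQv))
end
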